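/- Let σ_H(x) = 1 if x ≥ 0 and 0 otherwise (the Heaviside function), and for positive α₀, α₁ let HTAF(x | α₀, α₁) = σ(α₁ tanh(α₀ x)). Given ε ∈ (0, 1/2) with α₁ > log((1-ε)/ε) and α₀ ≥ (1/(2ε)) log((α₁ + log((1-ε)/ε))/(α₁ - log((1-ε)/ε))), we have |σ_H(x) - HTAF(x | α₀, α₁)| ≤ ε for all x with |x| ≥ ε, and |σ_H(x) - HTAF(x | α₀, α₁)| ≤ 1 for all x. -/

import Mathlib

noncomputable def sigmoid (x : ℝ) : ℝ := 1 / (1 + Real.exp (-x))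

noncomputable def HTAF (α₀ α₁ x : ℝ) : ℝ := sigmoid (α₁ * Real.tanh (α₀ * x))

noncomputable def heaviside (x : ℝ) : ℝ := if 0 ≤ x then 1 else 0

/-!
Put `L = log ((1 - ε) / ε)`, so that `σ L = 1 - ε`. The hypothesis on `α₀` says exactly
`artanh (L / α₁) ≤ α₀ ε`, hence for `x ≥ ε` we get `tanh (α₀ x) ≥ L / α₁` and
`HTAF x ≥ σ L = 1 - ε`. For `x ≤ -ε` the symmetry `HTAF (-x) = 1 - HTAF x` gives
`HTAF x ≤ ε`.
-/

open Set

namespace Real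

lemma sigmoid_log_one_sub_div {ε : ℝ} (hε : ε ∈ Ioo 0 1) :
    sigmoid (log ((1 - ε) / ε)) = 1 - ε := by
  obtain ⟨hε₀, hε₁⟩ := hε
  have h₁ : 0 < 1 - ε := by linarith
  rw [sigmoid_def, exp_neg, exp_log (div_pos h₁ hε₀), inv_div]
  field_simp
  ring

lemma log_one_sub_div_nonneg {ε : ℝ} (hε : ε ∈ Ioc 0 (1 / 2)) : 0 ≤ log ((1 - ε) / ε) :=
  log_nonneg (by rw [le_div_iff₀ hε.1]; linarith [hε.2])

lemma le_tanh_of_artanh_le {t y : ℝ} (ht : t ∈ Ioo (-1) 1) (h : artanh t ≤ y) :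
    t ≤ tanh y := by
  rwa [← artanh_le_artanh_iff ht ⟨neg_one_lt_tanh y, tanh_lt_one y⟩, artanh_tanh]

lemma artanh_div_eq_half_log {L a : ℝ} (h : |L| < a) :
    artanh (L / a) = 1 / 2 * log ((a + L) / (a - L)) := by
  obtain ⟨hL₁, hL₂⟩ := abs_lt.mp h
  have ha : 0 < a := by linarith
  have hmem : L / a ∈ Icc (-1) 1 :=
    ⟨by rw [le_div_iff₀ ha]; linarith, by rw [div_le_iff₀ ha]; linarith⟩
  rw [artanh_eq_half_log hmem]
  congr 2
  field_simp

end Real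

lemma sigmoid_eq_real_sigmoid : sigmoid = Real.sigmoid := by
  funext x
  rw [sigmoid, Real.sigmoid_def, one_div]

lemma HTAF_mem_Ioo (α₀ α₁ x : ℝ) : HTAF α₀ α₁ x ∈ Ioo 0 1 := by
  rw [HTAF, sigmoid_eq_real_sigmoid]
  exact ⟨Real.sigmoid_pos _, Real.sigmoid_lt_one _⟩

lemma HTAF_neg (α₀ α₁ x : ℝ) : HTAF α₀ α₁ (-x) = 1 - HTAF α₀ α₁ x := by
  simp only [HTAF, sigmoid_eq_real_sigmoid, mul_neg, Real.tanh_neg, Real.sigmoid_neg]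

lemma one_sub_le_HTAF {ε α₀ α₁ x : ℝ} (hε : ε ∈ Ioc 0 (1 / 2))
    (hα₁ : Real.log ((1 - ε) / ε) < α₁)
    (hα₀ : Real.artanh (Real.log ((1 - ε) / ε) / α₁) ≤ α₀ * ε) (hx : ε ≤ x) :
    1 - ε ≤ HTAF α₀ α₁ x := by
  obtain ⟨hε₀, hε₁⟩ := hε
  set L := Real.log ((1 - ε) / ε)
  have hL : 0 ≤ L := Real.log_one_sub_div_nonneg ⟨hε₀, hε₁⟩
  have hα₁pos : 0 < α₁ := hL.trans_lt hα₁
  have hα₀pos : 0 ≤ α₀ :=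
    nonneg_of_mul_nonneg_left ((Real.artanh_nonneg (by positivity)).trans hα₀) hε₀
  have ht : L / α₁ ∈ Ioo (-1) 1 :=
    ⟨by rw [lt_div_iff₀ hα₁pos]; linarith, by rw [div_lt_iff₀ hα₁pos]; linarith⟩
  have htanh : L / α₁ ≤ Real.tanh (α₀ * x) :=
    Real.le_tanh_of_artanh_le ht (hα₀.trans (mul_le_mul_of_nonneg_left hx hα₀pos))
  calc 1 - ε = Real.sigmoid L := (Real.sigmoid_log_one_sub_div ⟨hε₀, by linarith⟩).symm
    _ ≤ HTAF α₀ α₁ x := by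
      rw [HTAF, sigmoid_eq_real_sigmoid]
      exact Real.sigmoid_le ((div_le_iff₀' hα₁pos).mp htanh)

lemma heaviside_of_nonneg {x : ℝ} (hx : 0 ≤ x) : heaviside x = 1 := if_pos hx

lemma heaviside_of_neg {x : ℝ} (hx : x < 0) : heaviside x = 0 := if_neg hx.not_ge

lemma abs_heaviside_sub_HTAF_le_one (α₀ α₁ x : ℝ) :
    |heaviside x - HTAF α₀ α₁ x| ≤ 1 := by
  obtain ⟨hpos, hlt⟩ := HTAF_mem_Ioo α₀ α₁ x
  rcases le_or_gt 0 x with hx | hx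
  · rw [heaviside_of_nonneg hx, abs_le]; constructor <;> linarith
  · rw [heaviside_of_neg hx, abs_le]; constructor <;> linarith

theorem stmt_12_general (ε α₀ α₁ : ℝ)
    (hε : ε ∈ Set.Ioo (0:ℝ) (1/2))
    (hα₁ : α₁ > Real.log ((1 - ε) / ε))
    (hα₀ : α₀ ≥ (1 / (2 * ε)) *
      Real.log ((α₁ + Real.log ((1 - ε) / ε)) / (α₁ - Real.log ((1 - ε) / ε)))) :
    (∀ x : ℝ, |x| ≥ ε → |heaviside x - HTAF α₀ α₁ x| ≤ ε) ∧
    (∀ x : ℝ, |heaviside x - HTAF α₀ α₁ x| ≤ 1) := by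
  obtain ⟨hε₀, hε₁⟩ := hε
  set L := Real.log ((1 - ε) / ε)
  have hL : 0 ≤ L := Real.log_one_sub_div_nonneg ⟨hε₀, hε₁.le⟩
  have hartanh : Real.artanh (L / α₁) ≤ α₀ * ε := by
    rw [Real.artanh_div_eq_half_log (by rwa [abs_of_nonneg hL])]
    calc 1 / 2 * Real.log ((α₁ + L) / (α₁ - L))
        = 1 / (2 * ε) * Real.log ((α₁ + L) / (α₁ - L)) * ε := by field_simp
      _ ≤ α₀ * ε := by gcongr
  have hupper (x : ℝ) (hx : ε ≤ x) : 1 - ε ≤ HTAF α₀ α₁ x :=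
    one_sub_le_HTAF ⟨hε₀, hε₁.le⟩ hα₁ hartanh hx
  refine ⟨fun x hx => ?_, abs_heaviside_sub_HTAF_le_one α₀ α₁⟩
  obtain ⟨hpos, hlt⟩ := HTAF_mem_Ioo α₀ α₁ x
  rcases le_abs'.mp hx with hneg | hnonneg
  · have hsymm := hupper (-x) (by linarith)
    rw [HTAF_neg] at hsymm
    rw [heaviside_of_neg (by linarith), abs_le]; constructor <;> linarith
  · rw [heaviside_of_nonneg (by linarith), abs_le]; constructor <;> linarith [hupper x hnonneg]

theorem stmt_12 (ε α₀ α₁ : ℝ) (h₀ : 0 < α₀) (h₁ : 0 < α₁)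
    (hε : ε ∈ Set.Ioo (0:ℝ) (1/2))
    (hα₁ : α₁ > Real.log ((1 - ε) / ε))
    (hα₀ : α₀ ≥ (1 / (2 * ε)) *
      Real.log ((α₁ + Real.log ((1 - ε) / ε)) / (α₁ - Real.log ((1 - ε) / ε)))) :
    (∀ x : ℝ, |x| ≥ ε → |heaviside x - HTAF α₀ α₁ x| ≤ ε) ∧
    (∀ x : ℝ, |heaviside x - HTAF α₀ α₁ x| ≤ 1) :=
  stmt_12_general ε α₀ α₁ hε hα₁ hα₀
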